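/- Corollary (counterexample direction): let ρ_SA = Σ_{a,k} q_{ak} |r_k⟩⟨r_k| ⊗ |φ_a⟩⟨φ_a|, where {|r_k⟩} is orthonormal, {|φ_a⟩} are (possibly non-orthogonal) unit vectors, q_{ak} ≥ 0 sum to 1, and q_{ak} ≥ q_{a,k+1} for all a, with Hamiltonian eigenbasis {|r_k⟩} and ε_1 ≤ ... ≤ ε_d. Then for every complete projective measurement {Π_a} on the ancilla, W_{{Π_a}} − W = 0; in particular δW = 0. -/

import Mathlib

open Matrix Kronecker BigOperators ComplexOrder

noncomputable section

/-- Partial trace over the second (ancilla) factor. -/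
def ptrA {d m : ℕ} (ρ : Matrix (Fin d × Fin m) (Fin d × Fin m) ℂ) :
    Matrix (Fin d) (Fin d) ℂ := fun i j => ∑ a, ρ (i, a) (j, a)

/-- Partial trace over the first (system) factor. -/
def ptrS {d m : ℕ} (ρ : Matrix (Fin d × Fin m) (Fin d × Fin m) ℂ) :
    Matrix (Fin m) (Fin m) ℂ := fun x y => ∑ i, ρ (i, x) (i, y)

/-- Probability of outcome corresponding to ancilla projector `P`. -/
def outcomeProb {d m : ℕ} (ρ : Matrix (Fin d × Fin m) (Fin d × Fin m) ℂ)
    (P : Matrix (Fin m) (Fin m) ℂ) : ℝ :=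
  ((((1 : Matrix (Fin d) (Fin d) ℂ)) ⊗ₖ P) * ρ).trace.re

/-- Normalized conditional state of the system after ancilla outcome `P`. -/
def condState {d m : ℕ} (ρ : Matrix (Fin d × Fin m) (Fin d × Fin m) ℂ)
    (P : Matrix (Fin m) (Fin m) ℂ) : Matrix (Fin d) (Fin d) ℂ :=
  (outcomeProb ρ P)⁻¹ •
    ptrA (((1 : Matrix (Fin d) (Fin d) ℂ) ⊗ₖ P) * ρ *
      ((1 : Matrix (Fin d) (Fin d) ℂ) ⊗ₖ P))

/-- Passive energy `∑ₖ rₖ εₖ`: decreasing eigenvalues of `σ` paired with the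
increasingly ordered energies `ε`. -/
def passiveEnergy {d : ℕ} (ε : Fin d → ℝ) (σ : Matrix (Fin d) (Fin d) ℂ) : ℝ :=
  if h : σ.IsHermitian then
    ∑ k, (h.eigenvalues ∘ (Tuple.sort h.eigenvalues)) k.rev * ε k
  else 0

/-- The daemonic gain `δW`: supremum over complete projective ancilla
measurements of `W_{Π} - W`. -/
def deltaW {d m : ℕ} (ε : Fin d → ℝ)
    (ρ : Matrix (Fin d × Fin m) (Fin d × Fin m) ℂ) : ℝ :=
  sSup {g : ℝ | ∃ (n : ℕ) (P : Fin n → Matrix (Fin m) (Fin m) ℂ),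
    (∀ a, (P a).IsHermitian) ∧ (∀ a b, P a * P b = if a = b then P a else 0) ∧
    (∑ a, P a = 1) ∧
    g = passiveEnergy ε (ptrA ρ) -
      ∑ a, outcomeProb ρ (P a) * passiveEnergy ε (condState ρ (P a))}

end

/-!
Write `c_k = ∑_a q_{ak} ⟨φ_a, P φ_a⟩` (`cqPopulation`). For every orthogonal projection `P` on
the ancilla, the unnormalized post-measurement system state is `∑_k c_k |v_k⟩⟨v_k|`: it stays
diagonal in the energy eigenbasis, and since `⟨φ_a, P φ_a⟩ ≥ 0` its weights stay decreasing in
`k`. Hence its passive energy is the linear expression `∑_k c_k ε_k`, with no reordering of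
eigenvalues. Summing over a complete measurement, `∑_P ⟨φ_a, P φ_a⟩ = ⟨φ_a, φ_a⟩` recovers the
weights of the unmeasured reduced state, so measuring the ancilla extracts no extra work.
-/

theorem Tuple.comp_sort_eq_of_map_eq {n : ℕ} {α : Type*} [LinearOrder α] {f g : Fin n → α}
    (hfg : Finset.univ.val.map f = Finset.univ.val.map g) (hg : Monotone g) :
    f ∘ Tuple.sort f = g := by
  have hperm : (List.ofFn (f ∘ Tuple.sort f)).Perm (List.ofFn g) := by
    refine (Equiv.Perm.ofFn_comp_perm _ _).trans ?_
    rwa [Fin.univ_val_map, Fin.univ_val_map, Multiset.coe_eq_coe] at hfg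
  exact List.ofFn_injective <| hperm.eq_of_sortedLE
    (List.sortedLE_ofFn_iff.mpr (Tuple.monotone_sort f)) (List.sortedLE_ofFn_iff.mpr hg)

open Polynomial in
theorem Matrix.IsHermitian.eigenvalues_comp_sort_eq {𝕜 : Type*} [RCLike 𝕜] {n : ℕ}
    {A : Matrix (Fin n) (Fin n) 𝕜} (hA : A.IsHermitian) {μ : Fin n → ℝ} (hμ : Monotone μ)
    (hchar : A.charpoly = ∏ i, (X - C (μ i : 𝕜))) :
    hA.eigenvalues ∘ Tuple.sort hA.eigenvalues = μ := by
  refine Tuple.comp_sort_eq_of_map_eq ?_ hμ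
  have hroots : Finset.univ.val.map ((↑) ∘ μ : Fin n → 𝕜) =
      Finset.univ.val.map ((↑) ∘ hA.eigenvalues : Fin n → 𝕜) := by
    rw [← hA.roots_charpoly_eq_eigenvalues, hchar,
      ← roots_multiset_prod_X_sub_C (Finset.univ.val.map _), Multiset.map_map]
    rfl
  rw [← Multiset.map_map, ← Multiset.map_map] at hroots
  exact (Multiset.map_injective (RCLike.ofReal_injective (K := 𝕜)) hroots).symm

open Polynomial in
theorem passiveEnergy_sum_smul_vecMulVec {d : ℕ} (ε : Fin d → ℝ) {v : Fin d → Fin d → ℂ}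
    (hv : ∀ j k, star (v j) ⬝ᵥ v k = if j = k then (1 : ℂ) else 0) {c : Fin d → ℝ}
    (hc : Antitone c) :
    passiveEnergy ε (∑ k, (c k : ℂ) • vecMulVec (v k) (star (v k))) = ∑ k, c k * ε k := by
  set U : Matrix (Fin d) (Fin d) ℂ := of fun i k => v k i
  have hUU : Uᴴ * U = 1 := by
    ext j k
    simpa [U, mul_apply, one_apply, dotProduct] using hv j k
  have hσ : ∑ k, (c k : ℂ) • vecMulVec (v k) (star (v k)) =
      U * diagonal (fun k => (c k : ℂ)) * Uᴴ := by
    ext i j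
    rw [Matrix.mul_assoc, mul_apply]
    simp [U, Matrix.sum_apply, vecMulVec_apply, diagonal_mul, mul_left_comm]
  have herm : (U * diagonal (fun k => (c k : ℂ)) * Uᴴ).IsHermitian :=
    isHermitian_mul_mul_conjTranspose U (isHermitian_diagonal_of_self_adjoint _ <| by
      ext k; simp)
  have hchar : (U * diagonal (fun k => (c k : ℂ)) * Uᴴ).charpoly =
      ∏ k, (X - C ((c ∘ Fin.revPerm) k : ℂ)) := by
    rw [Matrix.mul_assoc, charpoly_mul_comm, Matrix.mul_assoc, hUU, Matrix.mul_one,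
      charpoly_diagonal]
    exact Fintype.prod_equiv Fin.revPerm _ _ fun _ => by simp
  have hsort := herm.eigenvalues_comp_sort_eq (fun i j hij => hc (Fin.rev_le_rev.mpr hij)) hchar
  rw [hσ, passiveEnergy, dif_pos herm, hsort]
  simp

section PartialTrace

variable {d m : ℕ}

theorem ptrA_sum {ι : Type*} (s : Finset ι)
    (f : ι → Matrix (Fin d × Fin m) (Fin d × Fin m) ℂ) :
    ptrA (∑ x ∈ s, f x) = ∑ x ∈ s, ptrA (f x) := by
  ext i j
  simp only [ptrA, Matrix.sum_apply]
  exact Finset.sum_comm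

theorem ptrA_smul (c : ℂ) (M : Matrix (Fin d × Fin m) (Fin d × Fin m) ℂ) :
    ptrA (c • M) = c • ptrA M := by
  ext i j
  simp [ptrA, Finset.mul_sum]

theorem ptrA_kronecker (A : Matrix (Fin d) (Fin d) ℂ) (B : Matrix (Fin m) (Fin m) ℂ) :
    ptrA (A ⊗ₖ B) = B.trace • A := by
  ext i j
  simp [ptrA, Matrix.trace, Finset.sum_mul, mul_comm (A i j)]

theorem trace_ptrA (M : Matrix (Fin d × Fin m) (Fin d × Fin m) ℂ) :
    (ptrA M).trace = M.trace := by
  simp [ptrA, Matrix.trace, Fintype.sum_prod_type]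

end PartialTrace

theorem one_kronecker_mul_kronecker_mul_one_kronecker {l n R : Type*} [Fintype l] [Fintype n]
    [DecidableEq l] [CommSemiring R] (P : Matrix n n R) (A : Matrix l l R) (B : Matrix n n R) :
    (1 ⊗ₖ P) * (A ⊗ₖ B) * (1 ⊗ₖ P) = A ⊗ₖ (P * B * P) := by
  rw [← mul_kronecker_mul, ← mul_kronecker_mul, Matrix.one_mul, Matrix.mul_one]

section StarProjection

variable {n 𝕜 : Type*} [Fintype n] [RCLike 𝕜] {P : Matrix n n 𝕜}

theorem IsStarProjection.posSemidef (hP : IsStarProjection P) : P.PosSemidef := by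
  have h := posSemidef_conjTranspose_mul_self P
  rwa [← star_eq_conjTranspose, hP.isSelfAdjoint.star_eq, hP.isIdempotentElem.eq] at h

theorem IsStarProjection.trace_mul_vecMulVec_mul (hP : IsStarProjection P) (x : n → 𝕜) :
    (P * vecMulVec x (star x) * P).trace = star x ⬝ᵥ (P *ᵥ x) := by
  rw [Matrix.trace_mul_comm, ← Matrix.mul_assoc, hP.isIdempotentElem.eq, mul_vecMulVec,
    trace_vecMulVec, dotProduct_comm]

end StarProjection

theorem mul_passiveEnergy_inv_smul_sum {d : ℕ} (ε : Fin d → ℝ) {v : Fin d → Fin d → ℂ}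
    (hv : ∀ j k, star (v j) ⬝ᵥ v k = if j = k then (1 : ℂ) else 0) {c : Fin d → ℝ}
    (hc0 : ∀ k, 0 ≤ c k) (hc : Antitone c) :
    (∑ k, c k) *
        passiveEnergy ε ((∑ k, c k)⁻¹ • ∑ k, (c k : ℂ) • vecMulVec (v k) (star (v k))) =
      ∑ k, c k * ε k := by
  set t := ∑ k, c k
  by_cases ht : t = 0
  · have hc_zero : ∀ k, c k = 0 := fun k =>
      (Finset.sum_eq_zero_iff_of_nonneg fun k _ => hc0 k).mp ht k (Finset.mem_univ k)
    simp [ht, hc_zero]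
  have hscaled : t⁻¹ • ∑ k, (c k : ℂ) • vecMulVec (v k) (star (v k)) =
      ∑ k, ((t⁻¹ * c k : ℝ) : ℂ) • vecMulVec (v k) (star (v k)) := by
    simp only [Finset.smul_sum, ← smul_assoc, Complex.real_smul, Complex.ofReal_mul]
  rw [hscaled, passiveEnergy_sum_smul_vecMulVec ε hv
    (hc.const_mul (inv_nonneg.mpr (Finset.sum_nonneg fun k _ => hc0 k))), Finset.mul_sum]
  exact Finset.sum_congr rfl fun k _ => by rw [mul_assoc, mul_inv_cancel_left₀ ht]

section CQState

variable {d m s : ℕ} (v : Fin d → Fin d → ℂ) (φ : Fin s → Fin m → ℂ) (q : Fin s → Fin d → ℝ)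

def cqState : Matrix (Fin d × Fin m) (Fin d × Fin m) ℂ :=
  ∑ a, ∑ k, (q a k : ℂ) • (vecMulVec (v k) (star (v k)) ⊗ₖ vecMulVec (φ a) (star (φ a)))

def cqPopulation (P : Matrix (Fin m) (Fin m) ℂ) (k : Fin d) : ℝ :=
  ∑ a, q a k * (star (φ a) ⬝ᵥ (P *ᵥ φ a)).re

variable {v φ q}

theorem cqPopulation_nonneg (hq0 : ∀ a k, 0 ≤ q a k) {P : Matrix (Fin m) (Fin m) ℂ}
    (hP : IsStarProjection P) (k : Fin d) : 0 ≤ cqPopulation φ q P k :=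
  Finset.sum_nonneg fun a _ => mul_nonneg (hq0 a k) (hP.posSemidef.re_dotProduct_nonneg _)

theorem cqPopulation_antitone (hqd : ∀ a, Antitone (q a)) {P : Matrix (Fin m) (Fin m) ℂ}
    (hP : IsStarProjection P) : Antitone (cqPopulation φ q P) := fun _ _ hkl =>
  Finset.sum_le_sum fun a _ =>
    mul_le_mul_of_nonneg_right (hqd a hkl) (hP.posSemidef.re_dotProduct_nonneg _)

theorem sum_cqPopulation {n : ℕ} (P : Fin n → Matrix (Fin m) (Fin m) ℂ) (k : Fin d) :
    ∑ i, cqPopulation φ q (P i) k = cqPopulation φ q (∑ i, P i) k := by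
  simp only [cqPopulation, Matrix.sum_mulVec, dotProduct_sum, Complex.re_sum, Finset.mul_sum]
  exact Finset.sum_comm

theorem ptrA_sandwich_cqState {P : Matrix (Fin m) (Fin m) ℂ} (hP : IsStarProjection P) :
    ptrA ((1 ⊗ₖ P) * cqState v φ q * (1 ⊗ₖ P)) =
      ∑ k, (cqPopulation φ q P k : ℂ) • vecMulVec (v k) (star (v k)) := by
  have hreal : ∀ a, star (φ a) ⬝ᵥ (P *ᵥ φ a) = ((star (φ a) ⬝ᵥ (P *ᵥ φ a)).re : ℂ) := fun a =>
    Complex.eq_re_of_ofReal_le (hP.posSemidef.dotProduct_mulVec_nonneg _)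
  simp only [cqState, cqPopulation, Matrix.mul_sum, Matrix.sum_mul, Matrix.mul_smul,
    Matrix.smul_mul, one_kronecker_mul_kronecker_mul_one_kronecker, ptrA_sum, ptrA_smul,
    ptrA_kronecker, hP.trace_mul_vecMulVec_mul, Complex.ofReal_sum, Complex.ofReal_mul,
    Finset.sum_smul, smul_smul]
  rw [Finset.sum_comm]
  simp_rw [← hreal]

theorem outcomeProb_cqState
    (hv : ∀ j k, star (v j) ⬝ᵥ v k = if j = k then (1 : ℂ) else 0)
    {P : Matrix (Fin m) (Fin m) ℂ} (hP : IsStarProjection P) :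
    outcomeProb (cqState v φ q) P = ∑ k, cqPopulation φ q P k := by
  have hidem : (1 ⊗ₖ P : Matrix (Fin d × Fin m) (Fin d × Fin m) ℂ) * (1 ⊗ₖ P) = 1 ⊗ₖ P := by
    rw [← mul_kronecker_mul, Matrix.one_mul, hP.isIdempotentElem.eq]
  have htrace : ((1 ⊗ₖ P) * cqState v φ q).trace =
      (ptrA ((1 ⊗ₖ P) * cqState v φ q * (1 ⊗ₖ P))).trace := by
    rw [trace_ptrA, Matrix.trace_mul_comm _ (1 ⊗ₖ P), ← Matrix.mul_assoc, hidem]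
  have hunit : ∀ k, (vecMulVec (v k) (star (v k))).trace = 1 := fun k => by
    rw [trace_vecMulVec, dotProduct_comm, hv k k, if_pos rfl]
  rw [outcomeProb, htrace, ptrA_sandwich_cqState hP]
  simp [Matrix.trace_sum, hunit]

theorem passiveEnergy_ptrA_cqState (ε : Fin d → ℝ)
    (hv : ∀ j k, star (v j) ⬝ᵥ v k = if j = k then (1 : ℂ) else 0)
    (hqd : ∀ a, Antitone (q a)) :
    passiveEnergy ε (ptrA (cqState v φ q)) = ∑ k, cqPopulation φ q 1 k * ε k := by
  have h := ptrA_sandwich_cqState (v := v) (φ := φ) (q := q) (IsStarProjection.one _)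
  rw [one_kronecker_one, Matrix.one_mul, Matrix.mul_one] at h
  rw [h, passiveEnergy_sum_smul_vecMulVec ε hv
    (cqPopulation_antitone hqd (IsStarProjection.one _))]

theorem outcomeProb_mul_passiveEnergy_condState (ε : Fin d → ℝ)
    (hv : ∀ j k, star (v j) ⬝ᵥ v k = if j = k then (1 : ℂ) else 0)
    (hq0 : ∀ a k, 0 ≤ q a k) (hqd : ∀ a, Antitone (q a))
    {P : Matrix (Fin m) (Fin m) ℂ} (hP : IsStarProjection P) :
    outcomeProb (cqState v φ q) P * passiveEnergy ε (condState (cqState v φ q) P) =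
      ∑ k, cqPopulation φ q P k * ε k := by
  rw [condState, ptrA_sandwich_cqState hP, outcomeProb_cqState hv hP]
  exact mul_passiveEnergy_inv_smul_sum ε hv (cqPopulation_nonneg hq0 hP)
    (cqPopulation_antitone hqd hP)

theorem sum_outcomeProb_mul_passiveEnergy_condState_cqState (ε : Fin d → ℝ)
    (hv : ∀ j k, star (v j) ⬝ᵥ v k = if j = k then (1 : ℂ) else 0)
    (hq0 : ∀ a k, 0 ≤ q a k) (hqd : ∀ a, Antitone (q a))
    {n : ℕ} {P : Fin n → Matrix (Fin m) (Fin m) ℂ} (hP : ∀ i, IsStarProjection (P i))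
    (hsum : ∑ i, P i = 1) :
    ∑ i, outcomeProb (cqState v φ q) (P i) * passiveEnergy ε (condState (cqState v φ q) (P i)) =
      passiveEnergy ε (ptrA (cqState v φ q)) := by
  simp only [outcomeProb_mul_passiveEnergy_condState ε hv hq0 hqd (hP _),
    passiveEnergy_ptrA_cqState ε hv hqd, ← hsum, ← sum_cqPopulation, Finset.sum_mul]
  exact Finset.sum_comm

end CQState

theorem deltaW_eq_zero_of_forall {d m : ℕ} {ε : Fin d → ℝ}
    {ρ : Matrix (Fin d × Fin m) (Fin d × Fin m) ℂ}
    (h : ∀ (n : ℕ) (P : Fin n → Matrix (Fin m) (Fin m) ℂ),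
      (∀ a, (P a).IsHermitian) →
      (∀ a b, P a * P b = if a = b then P a else 0) →
      (∑ a, P a = 1) →
      ∑ a, outcomeProb ρ (P a) * passiveEnergy ε (condState ρ (P a)) =
        passiveEnergy ε (ptrA ρ)) :
    deltaW ε ρ = 0 := by
  have htrivial : ∀ a b : Fin 1, (1 : Matrix (Fin m) (Fin m) ℂ) * 1 = if a = b then 1 else 0 :=
    fun a b => by rw [if_pos (Subsingleton.elim a b), Matrix.one_mul]
  have hgains : {g : ℝ | ∃ (n : ℕ) (P : Fin n → Matrix (Fin m) (Fin m) ℂ),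
      (∀ a, (P a).IsHermitian) ∧ (∀ a b, P a * P b = if a = b then P a else 0) ∧
      (∑ a, P a = 1) ∧
      g = passiveEnergy ε (ptrA ρ) -
        ∑ a, outcomeProb ρ (P a) * passiveEnergy ε (condState ρ (P a))} = {0} := by
    ext g
    constructor
    · rintro ⟨n, P, hherm, horth, hsum, rfl⟩
      rw [h n P hherm horth hsum, sub_self, Set.mem_singleton_iff]
    · rintro rfl
      refine ⟨1, fun _ => 1, fun _ => isHermitian_one, htrivial, by simp, ?_⟩
      rw [h 1 _ (fun _ => isHermitian_one) htrivial (by simp), sub_self]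
  rw [deltaW, hgains, csSup_singleton]

theorem cq_state_zero_gain_general {d m s : ℕ}
    (ε : Fin d → ℝ)
    (v : Fin d → Fin d → ℂ)
    (hv : ∀ j k, star (v j) ⬝ᵥ v k = if j = k then (1 : ℂ) else 0)
    (φ : Fin s → Fin m → ℂ)
    (q : Fin s → Fin d → ℝ)
    (hq0 : ∀ a k, 0 ≤ q a k)
    (hqd : ∀ a, Antitone (q a))
    (ρ : Matrix (Fin d × Fin m) (Fin d × Fin m) ℂ)
    (hρ : ρ = ∑ a, ∑ k, (q a k : ℂ) •
      (vecMulVec (v k) (star (v k)) ⊗ₖ vecMulVec (φ a) (star (φ a)))) :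
    (∀ (n : ℕ) (P : Fin n → Matrix (Fin m) (Fin m) ℂ),
      (∀ a, (P a).IsHermitian) →
      (∀ a b, P a * P b = if a = b then P a else 0) →
      (∑ a, P a = 1) →
      ∑ a, outcomeProb ρ (P a) * passiveEnergy ε (condState ρ (P a)) =
        passiveEnergy ε (ptrA ρ)) ∧
    deltaW ε ρ = 0 := by
  obtain rfl : ρ = cqState v φ q := hρ
  refine ⟨fun n P hherm horth hsum => ?_,
    deltaW_eq_zero_of_forall fun n P hherm horth hsum => ?_⟩
  all_goals
    exact sum_outcomeProb_mul_passiveEnergy_condState_cqState ε hv hq0 hqd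
      (fun a => ⟨(horth a a).trans (if_pos rfl), hherm a⟩) hsum

/-- Corollary, counterexample direction: for
ρ_SA = ∑_{a,k} q_{ak} |rₖ⟩⟨rₖ| ⊗ |φₐ⟩⟨φₐ| with {|φₐ⟩} possibly non-orthogonal
unit vectors and q_{ak} decreasing in k for each a, every projective ancilla
measurement gives W_{Πₐ} − W = 0; in particular δW = 0. -/
theorem cq_state_zero_gain {d m s : ℕ}
    (ε : Fin d → ℝ) (hε : Monotone ε)
    (v : Fin d → Fin d → ℂ)
    (hv : ∀ j k, star (v j) ⬝ᵥ v k = if j = k then (1 : ℂ) else 0)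
    (φ : Fin s → Fin m → ℂ)
    (hφ : ∀ a, star (φ a) ⬝ᵥ φ a = (1 : ℂ))
    (q : Fin s → Fin d → ℝ)
    (hq0 : ∀ a k, 0 ≤ q a k) (hq1 : ∑ a, ∑ k, q a k = 1)
    (hqd : ∀ a, Antitone (q a))
    (ρ : Matrix (Fin d × Fin m) (Fin d × Fin m) ℂ)
    (hρ : ρ = ∑ a, ∑ k, (q a k : ℂ) •
      (vecMulVec (v k) (star (v k)) ⊗ₖ vecMulVec (φ a) (star (φ a)))) :
    (∀ (n : ℕ) (P : Fin n → Matrix (Fin m) (Fin m) ℂ),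
      (∀ a, (P a).IsHermitian) →
      (∀ a b, P a * P b = if a = b then P a else 0) →
      (∑ a, P a = 1) →
      ∑ a, outcomeProb ρ (P a) * passiveEnergy ε (condState ρ (P a)) =
        passiveEnergy ε (ptrA ρ)) ∧
    deltaW ε ρ = 0 :=
  cq_state_zero_gain_general ε v hv φ q hq0 hqd ρ hρ
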